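/- Explicit composition failure for hospital-proposing Gale–Shapley: let D = {i1, i2, j, k} with clusters {i1, i2}, {j}, {k}, and H = {A, B, C, D}. Doctor preferences: A ≻_{i1} B ≻_{i1} C ≻_{i1} D; B ≻_{i2} A ≻_{i2} D ≻_{i2} C; C ≻_j B ≻_j A ≻_j D; D ≻_k A ≻_k B ≻_k C. Consider all preference profiles in which hospital A's strict order on D refines the cluster order {i1,i2} ≻ {j} ≻ {k}, hospital B's refines {j} ≻ {i1,i2} ≻ {k}, hospital C's refines {i1,i2} ≻ {j} ≻ {k}, and hospital D's refines {i1,i2} ≻ {k} ≻ {j} (each hospital ordering i1 and i2 internally in either way). Then: (1) for every such profile in which A ranks i1 above i2, the matching m1 = {i1 ↦ A, i2 ↦ B, j ↦ C, k ↦ D} is the hospital-optimal stable matching; (2) for every such profile in which A ranks i2 above i1, the matching m2 = {i1 ↦ C, i2 ↦ A, j ↦ B, k ↦ D} is the hospital-optimal stable matching; and (3) the allocation π = (1/2)·δ_{m1} + (1/2)·δ_{m2} is not PIIF with respect to the proto-metric: under π, the probability that i1's match lies in its two most preferred hospitals {A, B} is 1/2, while the probability that i2's match lies in {A, B} is 1,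 so the prospect of i1 does not stochastically dominate the prospect of i2 with respect to ≻_{i1}. -/

import Mathlib

/-! Parts (1) and (2) are a finite verification: there are sixteen admissible hospital
profiles and only `4! = 24` matchings, so stability and hospital-optimality are decided by
enumeration. Under `π`, doctor `i1` gets `A` or `C` and doctor `i2` gets `A` or `B`, each with
probability `1/2`; so at the threshold `B` of `≻_{i1}` the upper set `{A, B}` has mass `1/2`
for `i1` but `1` for `i2`, and since `i1` and `i2` share a cluster, `π` is not PIIF. -/

open Finset

/-- A probabilistic allocation: a finitely supported probability distribution over
matchings (bijections between doctors `D` and hospitals `H`). -/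
def IsAlloc {D H : Type*} [Fintype D] [Fintype H] [DecidableEq D] [DecidableEq H]
    (π : (D ≃ H) → ℝ) : Prop :=
  (∀ m, 0 ≤ π m) ∧ (∑ m : D ≃ H, π m) = 1

/-- The prospect of doctor `i` under the allocation `π`: the probability that `i`
is matched to hospital `h`. -/
def prospect {D H : Type*} [Fintype D] [Fintype H] [DecidableEq D] [DecidableEq H]
    (π : (D ≃ H) → ℝ) (i : D) (h : H) : ℝ :=
  ∑ m : D ≃ H, if m i = h then π m else 0

/-- `p` is a probability distribution on `H`. -/
def IsDist {H : Type*} [Fintype H] (p : H → ℝ) : Prop :=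
  (∀ h, 0 ≤ p h) ∧ (∑ h : H, p h) = 1

/-- Total variation distance between two distributions on `H`. -/
noncomputable def TV {H : Type*} [Fintype H] (p q : H → ℝ) : ℝ :=
  (1 / 2) * ∑ h : H, |p h - q h|

/-- `p` stochastically dominates `q` with respect to the strict preference relation
`pref` (where `pref x y` means `x` is strictly preferred to `y`): for every `h`, the
probability of an outcome at least as good as `h` under `p` is at least that under `q`. -/
def SDom {H : Type*} [Fintype H] (pref : H → H → Prop) (p q : H → ℝ) : Prop :=
  ∀ h : H,
    (∑ h' : H, Set.indicator {x : H | pref x h ∨ x = h} q h') ≤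
      ∑ h' : H, Set.indicator {x : H | pref x h ∨ x = h} p h'

/-- Preference-informed individual fairness with respect to a (pseudo)metric `d`,
total variation distance, and the doctors' strict preferences `pref`. -/
def PIIF {D H : Type*} [Fintype D] [Fintype H] [DecidableEq D] [DecidableEq H]
    (d : D → D → ℝ) (pref : D → H → H → Prop) (π : (D ≃ H) → ℝ) : Prop :=
  ∀ i j : D, ∃ p : H → ℝ,
    IsDist p ∧ TV p (prospect π j) ≤ d i j ∧ SDom (pref i) (prospect π i) p

/-- PIIF with respect to the proto-metric induced by the cluster map `c`: the prospect
of every doctor stochastically dominates the prospect of every doctor in its cluster. -/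
def ClusterPIIF {D H K : Type*} [Fintype D] [Fintype H] [DecidableEq D] [DecidableEq H]
    (c : D → K) (pref : D → H → H → Prop) (π : (D ≃ H) → ℝ) : Prop :=
  ∀ i j : D, c i = c j → SDom (pref i) (prospect π i) (prospect π j)

namespace Stmt5

/-! Doctors: `i1 = 0`, `i2 = 1`, `j = 2`, `k = 3`.
Hospitals: `A = 0`, `B = 1`, `C = 2`, `D = 3`.
Clusters: `{i1, i2}` (cluster `0`), `{j}` (cluster `1`), `{k}` (cluster `2`). -/

/-- The cluster map. -/
def c : Fin 4 → Fin 3 := ![0, 0, 1, 2]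

/-- Rank functions of the doctors over the hospitals (rank `0` is best):
`A ≻_{i1} B ≻_{i1} C ≻_{i1} D`; `B ≻_{i2} A ≻_{i2} D ≻_{i2} C`;
`C ≻_j B ≻_j A ≻_j D`; `D ≻_k A ≻_k B ≻_k C`. -/
def drk : Fin 4 → Fin 4 → ℕ := ![![0, 1, 2, 3], ![1, 0, 3, 2], ![2, 1, 0, 3], ![1, 2, 3, 0]]

/-- Doctor `i` strictly prefers hospital `h1` to hospital `h2`. -/
def dpref (i : Fin 4) (h1 h2 : Fin 4) : Prop := drk i h1 < drk i h2

/-- A matching `m` is stable for the hospital rank functions `R` (rank `0` is best):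
no doctor–hospital pair prefer each other to their partners. -/
def StableFor (R : Fin 4 → Fin 4 → ℕ) (m : Fin 4 ≃ Fin 4) : Prop :=
  ¬ ∃ (i : Fin 4) (h : Fin 4), dpref i h (m i) ∧ R h i < R h (m.symm h)

/-- `m` is the hospital-optimal stable matching for the hospital ranks `R`. -/
def HospitalOptimalStable (R : Fin 4 → Fin 4 → ℕ) (m : Fin 4 ≃ Fin 4) : Prop :=
  StableFor R m ∧
    ∀ m' : Fin 4 ≃ Fin 4, StableFor R m' →
      ∀ h : Fin 4, m.symm h = m'.symm h ∨ R h (m.symm h) < R h (m'.symm h)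

/-- The matching `i1 ↦ A, i2 ↦ B, j ↦ C, k ↦ D`. -/
def m1 : Fin 4 ≃ Fin 4 := Equiv.refl (Fin 4)

/-- The matching `i1 ↦ C, i2 ↦ A, j ↦ B, k ↦ D`. -/
def m2 : Fin 4 ≃ Fin 4 := ⟨![2, 0, 1, 3], ![1, 2, 0, 3], by decide, by decide⟩

/-- The allocation `π = (1/2)·δ_{m1} + (1/2)·δ_{m2}`. -/
noncomputable def π : (Fin 4 ≃ Fin 4) → ℝ := fun m =>
  (1 / 2) * (if m = m1 then 1 else 0) + (1 / 2) * (if m = m2 then 1 else 0)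

end Stmt5

theorem prospect_mix_pointMass {D H : Type*} [Fintype D] [Fintype H] [DecidableEq D]
    [DecidableEq H] (a b : ℝ) (m₁ m₂ : D ≃ H) (i : D) (h : H) :
    prospect (fun m => a * (if m = m₁ then 1 else 0) + b * (if m = m₂ then 1 else 0)) i h =
      a * (if m₁ i = h then 1 else 0) + b * (if m₂ i = h then 1 else 0) := by
  simp [prospect, ← Finset.sum_filter, Finset.sum_add_distrib]

namespace Stmt5

instance (i : Fin 4) : DecidableRel (dpref i) := fun _ _ => by unfold dpref; infer_instance

instance (R : Fin 4 → Fin 4 → ℕ) (m : Fin 4 ≃ Fin 4) : Decidable (StableFor R m) := by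
  unfold StableFor; infer_instance

instance (R : Fin 4 → Fin 4 → ℕ) (m : Fin 4 ≃ Fin 4) :
    Decidable (HospitalOptimalStable R m) := by
  unfold HospitalOptimalStable; infer_instance

theorem hospitalOptimalStable_of_refines (R : Fin 4 → Fin 4 → ℕ)
    (hA : R 0 = ![0, 1, 2, 3] ∨ R 0 = ![1, 0, 2, 3])
    (hB : R 1 = ![1, 2, 0, 3] ∨ R 1 = ![2, 1, 0, 3])
    (hC : R 2 = ![0, 1, 2, 3] ∨ R 2 = ![1, 0, 2, 3])
    (hD : R 3 = ![0, 1, 3, 2] ∨ R 3 = ![1, 0, 3, 2]) :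
    (R 0 0 < R 0 1 → HospitalOptimalStable R m1) ∧
      (R 0 1 < R 0 0 → HospitalOptimalStable R m2) := by
  have hR : R = ![R 0, R 1, R 2, R 3] := (FinVec.etaExpand_eq R).symm
  rcases hA with hA | hA <;> rcases hB with hB | hB <;> rcases hC with hC | hC <;>
    rcases hD with hD | hD <;> rw [hR, hA, hB, hC, hD] <;> decide

theorem prospect_π (i : Fin 4) (h : Fin 4) :
    prospect π i h = 1 / 2 * (if m1 i = h then 1 else 0) + 1 / 2 * (if m2 i = h then 1 else 0) :=
  prospect_mix_pointMass _ _ _ _ i h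

theorem prospect_π_i1 : prospect π 0 = ![1 / 2, 0, 1 / 2, 0] := by
  funext h; fin_cases h <;> simp [prospect_π, m1, m2]

theorem prospect_π_i2 : prospect π 1 = ![1 / 2, 1 / 2, 0, 0] := by
  funext h; fin_cases h <;> simp [prospect_π, m1, m2]

theorem sum_indicator_i1_atLeast_B (p : Fin 4 → ℝ) :
    ∑ h, Set.indicator {x | dpref 0 x 1 ∨ x = 1} p h = p 0 + p 1 := by
  simp [Fin.sum_univ_four, Set.indicator, dpref, drk]

theorem not_sdom_i1_i2 : ¬ SDom (dpref 0) (prospect π 0) (prospect π 1) := by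
  intro h
  have := h 1
  rw [sum_indicator_i1_atLeast_B, sum_indicator_i1_atLeast_B, prospect_π_i1, prospect_π_i2] at this
  norm_num at this

/-- Explicit composition failure for hospital-proposing Gale–Shapley:
for every profile in which `A`'s strict order refines `{i1,i2} ≻ {j} ≻ {k}`, `B`'s
refines `{j} ≻ {i1,i2} ≻ {k}`, `C`'s refines `{i1,i2} ≻ {j} ≻ {k}` and `D`'s refines
`{i1,i2} ≻ {k} ≻ {j}` (each ordering `i1, i2` internally in either way):
(1) if `A` ranks `i1` above `i2` then `m1` is the hospital-optimal stable matching;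
(2) if `A` ranks `i2` above `i1` then `m2` is the hospital-optimal stable matching;
(3) under `π = (1/2)·δ_{m1} + (1/2)·δ_{m2}`, the probability that `i1` is matched
into its top two hospitals `{A, B}` is `1/2` while for `i2` it is `1`, the prospect
of `i1` does not stochastically dominate the prospect of `i2`, and `π` is not PIIF. -/
theorem hospital_propose_explicit_failure :
    (∀ R : Fin 4 → Fin 4 → ℕ,
      (R 0 = ![0, 1, 2, 3] ∨ R 0 = ![1, 0, 2, 3]) →
      (R 1 = ![1, 2, 0, 3] ∨ R 1 = ![2, 1, 0, 3]) →
      (R 2 = ![0, 1, 2, 3] ∨ R 2 = ![1, 0, 2, 3]) →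
      (R 3 = ![0, 1, 3, 2] ∨ R 3 = ![1, 0, 3, 2]) →
      ((R 0 0 < R 0 1 → HospitalOptimalStable R m1) ∧
       (R 0 1 < R 0 0 → HospitalOptimalStable R m2))) ∧
    prospect π 0 0 + prospect π 0 1 = 1 / 2 ∧
    prospect π 1 0 + prospect π 1 1 = 1 ∧
    ¬ SDom (dpref 0) (prospect π 0) (prospect π 1) ∧
    ¬ ClusterPIIF c dpref π := by
  refine ⟨hospitalOptimalStable_of_refines, ?_, ?_, not_sdom_i1_i2,
    fun h => not_sdom_i1_i2 (h 0 1 rfl)⟩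
  · rw [prospect_π_i1]; norm_num
  · rw [prospect_π_i2]; norm_num

end Stmt5
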